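/- arXiv:2402.14695 — 3 statements merged into one kernel-verified Lean document; each statement's English description precedes it below -/
import Mathlib

section
/- Let a₀, a₁, a₂ > 0, p₀, p₁, p₂ ∈ ℝ with p₀ > p₁. Set A = sqrt(a₁(a₂ + a₀)/(a₀(a₁ + a₂))) and B = sqrt(a₂(a₁ + a₀)/(a₀(a₁ + a₂))). Then Q_x := ((p₁ − p₂)B − (p₀ − p₁))/B is less than or equal to R_y := ((p₁ − p₂)A + (p₀ − p₂))/(A + 1), i.e., the admissible interval [Q_x, R_y] for the positive-click weight r is nonempty. -/
/-- Nonemptiness of the positive-click admissible interval `[Q_x, R_y]` when `p₀ > p₁`. -/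
theorem positive_click_interval_nonempty
    (a₀ a₁ a₂ p₀ p₁ p₂ : ℝ)
    (ha₀ : 0 < a₀) (ha₁ : 0 < a₁) (ha₂ : 0 < a₂) (hp : p₀ > p₁)
    (A B : ℝ)
    (hA : A = Real.sqrt (a₁ * (a₂ + a₀) / (a₀ * (a₁ + a₂))))
    (hB : B = Real.sqrt (a₂ * (a₁ + a₀) / (a₀ * (a₁ + a₂)))) :
    ((p₁ - p₂) * B - (p₀ - p₁)) / B ≤ ((p₁ - p₂) * A + (p₀ - p₂)) / (A + 1) := by
  have hA0 : 0 < A := hA ▸ Real.sqrt_pos.mpr (by positivity)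
  have hB0 : 0 < B := hB ▸ Real.sqrt_pos.mpr (by positivity)
  rw [div_le_div_iff₀ hB0 (by linarith)]
  nlinarith [mul_pos (sub_pos.mpr hp) hA0, mul_pos (sub_pos.mpr hp) hB0]
end

section
/- Let Ω be partitioned into Ω₀, Ω₁, Ω₂ of positive finite measures a₀, a₁, a₂ and let I take values p₀, p₁, p₂ on these sets with p₀ > p₁. Set C = sqrt(a₀(a₂+a₁)/(a₁(a₀+a₂))), E = sqrt(a₂(a₀+a₁)/(a₁(a₀+a₂))), L_y = ((p₀−p₂)C + (p₁−p₂))/(C+1) and P_y = ((p₀−p₂)E + (p₀−p₁))/E. If L_y ≤ r ≤ P_y, then both (p₀−p₂−r)² · a₀/(a₂+a₀) ≤ (p₁−p₂−r)² · a₁/(a₁+a₂) and (p₀−p₂−r)² · a₂/(a₂+a₀) ≤ (p₀−p₁)² · a₁/(a₁+a₀) hold. -/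
set_option maxHeartbeats 1600000 in
/-- Negative-click theorem: any `r ∈ [L_y, P_y]` satisfies both energy-comparison
inequalities making `G = Ω₁` the minimizer. -/
theorem negative_click_interval_sufficient
    (a₀ a₁ a₂ p₀ p₁ p₂ r : ℝ)
    (ha₀ : 0 < a₀) (ha₁ : 0 < a₁) (ha₂ : 0 < a₂) (hp : p₀ > p₁)
    (C E Ly Py : ℝ)
    (hC : C = Real.sqrt (a₀ * (a₂ + a₁) / (a₁ * (a₀ + a₂))))
    (hE : E = Real.sqrt (a₂ * (a₀ + a₁) / (a₁ * (a₀ + a₂))))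
    (hLy : Ly = ((p₀ - p₂) * C + (p₁ - p₂)) / (C + 1))
    (hPy : Py = ((p₀ - p₂) * E + (p₀ - p₁)) / E)
    (hr₁ : Ly ≤ r) (hr₂ : r ≤ Py) :
    (p₀ - p₂ - r) ^ 2 * (a₀ / (a₂ + a₀)) ≤ (p₁ - p₂ - r) ^ 2 * (a₁ / (a₁ + a₂)) ∧
    (p₀ - p₂ - r) ^ 2 * (a₂ / (a₂ + a₀)) ≤ (p₀ - p₁) ^ 2 * (a₁ / (a₁ + a₀)) := by
  have hargC : (0:ℝ) < a₀ * (a₂ + a₁) / (a₁ * (a₀ + a₂)) := by positivity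
  have hargE : (0:ℝ) < a₂ * (a₀ + a₁) / (a₁ * (a₀ + a₂)) := by positivity
  have hC0 : 0 < C := by rw [hC]; exact Real.sqrt_pos.mpr hargC
  have hE0 : 0 < E := by rw [hE]; exact Real.sqrt_pos.mpr hargE
  have hC2 : C ^ 2 = a₀ * (a₂ + a₁) / (a₁ * (a₀ + a₂)) := by
    rw [hC, Real.sq_sqrt hargC.le]
  have hE2 : E ^ 2 = a₂ * (a₀ + a₁) / (a₁ * (a₀ + a₂)) := by
    rw [hE, Real.sq_sqrt hargE.le]
  set u := p₀ - p₂ - r with hu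
  set v := p₁ - p₂ - r with hv
  -- cleared-denominator versions of the squares
  have hden : (0:ℝ) < a₁ * (a₀ + a₂) := by positivity
  have hC2' : C ^ 2 * (a₁ * (a₀ + a₂)) = a₀ * (a₂ + a₁) := by
    rw [hC2]; field_simp
  have hE2' : E ^ 2 * (a₁ * (a₀ + a₂)) = a₂ * (a₀ + a₁) := by
    rw [hE2]; field_simp
  -- constraint from Ly ≤ r
  have h1 : u * C + v ≤ 0 := by
    rw [hLy, div_le_iff₀ (by linarith : (0:ℝ) < C + 1)] at hr₁
    nlinarith [hr₁]
  -- constraint from r ≤ Py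
  have h2 : v ≤ u * (1 + E) := by
    rw [hPy, le_div_iff₀ hE0] at hr₂
    nlinarith [hr₂]
  -- comparisons of C, E
  have hEC : E ≤ C + 1 := by
    by_contra hcon
    push_neg at hcon
    have hprod : 0 < (E - (C + 1)) * (E + (C + 1)) :=
      mul_pos (by linarith) (by linarith)
    nlinarith [mul_pos hden hprod, hC2', hE2', mul_pos hC0 hden, mul_pos ha₀ ha₁]
  have hCE : C ≤ E + 1 := by
    by_contra hcon
    push_neg at hcon
    have hprod : 0 < (C - (E + 1)) * (C + (E + 1)) :=
      mul_pos (by linarith) (by linarith)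
    nlinarith [mul_pos hden hprod, hC2', hE2', mul_pos hE0 hden, mul_pos ha₁ ha₂]
  have huv : u - v = p₀ - p₁ := by rw [hu, hv]; ring
  clear_value u v
  -- key squared inequalities
  have key1 : C ^ 2 * u ^ 2 ≤ v ^ 2 := by
    rcases le_or_gt 0 u with h | h
    · have hcu : 0 ≤ C * u := mul_nonneg hC0.le h
      linarith [mul_nonneg (by linarith : (0:ℝ) ≤ -v - C * u)
        (by linarith : (0:ℝ) ≤ -v + C * u)]
    · have h3 : (E + 1) * u ≤ C * u := mul_le_mul_of_nonpos_right hCE h.le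
      have : v ≤ C * u := by linarith [h2]
      have hcu : C * u ≤ 0 := mul_nonpos_of_nonneg_of_nonpos hC0.le h.le
      linarith [mul_nonneg (by linarith : (0:ℝ) ≤ -v + C * u)
        (by linarith : (0:ℝ) ≤ -v - C * u)]
  have key2 : E ^ 2 * u ^ 2 ≤ (u - v) ^ 2 := by
    rcases le_or_gt 0 u with h | h
    · have h3 : E * u ≤ (C + 1) * u := mul_le_mul_of_nonneg_right hEC h
      have : E * u ≤ u - v := by linarith [h1]
      have heu : 0 ≤ E * u := mul_nonneg hE0.le h
      linarith [mul_nonneg (by linarith : (0:ℝ) ≤ (u - v) - E * u)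
        (by linarith : (0:ℝ) ≤ (u - v) + E * u)]
    · have : -(E * u) ≤ u - v := by linarith [h2]
      have heu : E * u ≤ 0 := mul_nonpos_of_nonneg_of_nonpos hE0.le h.le
      linarith [mul_nonneg (by linarith : (0:ℝ) ≤ (u - v) + E * u)
        (by linarith : (0:ℝ) ≤ (u - v) - E * u)]
  -- clear denominators in key inequalities
  have key1' : a₀ * (a₂ + a₁) * u ^ 2 ≤ v ^ 2 * (a₁ * (a₀ + a₂)) := by
    have h := mul_le_mul_of_nonneg_right key1 hden.le
    have e : a₀ * (a₂ + a₁) * u ^ 2 = C ^ 2 * u ^ 2 * (a₁ * (a₀ + a₂)) := by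
      linear_combination u ^ 2 * hC2'.symm
    rw [e]; exact h
  have key2' : a₂ * (a₀ + a₁) * u ^ 2 ≤ (u - v) ^ 2 * (a₁ * (a₀ + a₂)) := by
    have h := mul_le_mul_of_nonneg_right key2 hden.le
    have e : a₂ * (a₀ + a₁) * u ^ 2 = E ^ 2 * u ^ 2 * (a₁ * (a₀ + a₂)) := by
      linear_combination u ^ 2 * hE2'.symm
    rw [e]; exact h
  constructor
  · rw [mul_div_assoc', mul_div_assoc',
      div_le_div_iff₀ (by linarith : (0:ℝ) < a₂ + a₀) (by linarith : (0:ℝ) < a₁ + a₂)]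
    linarith [key1']
  · rw [mul_div_assoc', mul_div_assoc',
      div_le_div_iff₀ (by linarith : (0:ℝ) < a₂ + a₀) (by linarith : (0:ℝ) < a₁ + a₀)]
    rw [← huv]
    linarith [key2']
end

section
/- Let a₀, a₁, a₂ > 0 and p₀, p₁, p₂ ∈ ℝ with p₀ > p₁. Set A = sqrt(a₁(a₂+a₀)/(a₀(a₁+a₂))), B = sqrt(a₂(a₁+a₀)/(a₀(a₁+a₂))), R_y = ((p₁−p₂)A + (p₀−p₂))/(A+1), Q_x = ((p₁−p₂)B − (p₀−p₁))/B, Q_y = ((p₁−p₂)B + (p₀−p₁))/B. If A > 1 (equivalently a₁ > a₀), then R_x := ((p₁−p₂)A − (p₀−p₂))/(A−1) satisfies R_x ≤ Q_x ≤ R_y ≤ Q_y. -/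
set_option maxHeartbeats 1000000 in
/-- Ordering of the interval endpoints `R_x ≤ Q_x ≤ R_y ≤ Q_y` in the
positive-click analysis when `A > 1` and `p₀ > p₁`. -/
theorem positive_click_endpoint_ordering
    (a₀ a₁ a₂ p₀ p₁ p₂ : ℝ)
    (ha₀ : 0 < a₀) (ha₁ : 0 < a₁) (ha₂ : 0 < a₂) (hp : p₀ > p₁)
    (A B Rx Ry Qx Qy : ℝ)
    (hA : A = Real.sqrt (a₁ * (a₂ + a₀) / (a₀ * (a₁ + a₂))))
    (hB : B = Real.sqrt (a₂ * (a₁ + a₀) / (a₀ * (a₁ + a₂))))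
    (hAgt : A > 1)
    (hRx : Rx = ((p₁ - p₂) * A - (p₀ - p₂)) / (A - 1))
    (hRy : Ry = ((p₁ - p₂) * A + (p₀ - p₂)) / (A + 1))
    (hQx : Qx = ((p₁ - p₂) * B - (p₀ - p₁)) / B)
    (hQy : Qy = ((p₁ - p₂) * B + (p₀ - p₁)) / B) :
    Rx ≤ Qx ∧ Qx ≤ Ry ∧ Ry ≤ Qy := by
  have hden : (0:ℝ) < a₀ * (a₁ + a₂) := by positivity
  have hA2 : A ^ 2 * (a₀ * (a₁ + a₂)) = a₁ * (a₂ + a₀) := by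
    rw [hA, Real.sq_sqrt (by positivity)]
    field_simp
  have hB2 : B ^ 2 * (a₀ * (a₁ + a₂)) = a₂ * (a₁ + a₀) := by
    rw [hB, Real.sq_sqrt (by positivity)]
    field_simp
  have hB0 : 0 < B := by
    rw [hB]; exact Real.sqrt_pos.mpr (by positivity)
  have hAm : 0 < A - 1 := by linarith
  have hAp : 0 < A + 1 := by linarith
  have key1 : (A+1)^2 * (a₀*(a₁+a₂)) - B^2*(a₀*(a₁+a₂))
      = a₀*(a₁-a₂) + (2*A+1)*(a₀*(a₁+a₂)) := by
    linear_combination hA2 - hB2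
  have key2 : B^2*(a₀*(a₁+a₂)) - (A-1)^2 * (a₀*(a₁+a₂))
      = a₀*(a₂-a₁) + (2*A-1)*(a₀*(a₁+a₂)) := by
    linear_combination hB2 - hA2
  have hmul1 : 3*(a₀*(a₁+a₂)) ≤ (2*A+1)*(a₀*(a₁+a₂)) :=
    mul_le_mul_of_nonneg_right (by linarith) hden.le
  have hmul2 : 1*(a₀*(a₁+a₂)) ≤ (2*A-1)*(a₀*(a₁+a₂)) :=
    mul_le_mul_of_nonneg_right (by linarith) hden.le
  have h1sq : B^2 ≤ (A+1)^2 := by nlinarith [key1, hmul1]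
  have h2sq : (A-1)^2 ≤ B^2 := by nlinarith [key2, hmul2]
  have h1 : B ≤ A + 1 := by nlinarith [h1sq, mul_pos hB0 hAp]
  have h2 : A - 1 ≤ B := by nlinarith [h2sq, mul_pos hB0 hAm]
  clear hA hB hA2 hB2 key1 key2 hmul1 hmul2 h1sq h2sq hden
  have hd : (0:ℝ) ≤ p₀ - p₁ := by linarith
  refine ⟨?_, ?_, ?_⟩
  · rw [hRx, hQx, div_le_div_iff₀ hAm hB0]
    have e : ((p₁-p₂)*B - (p₀-p₁))*(A-1) - ((p₁-p₂)*A - (p₀-p₂))*B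
        = (p₀-p₁)*(B-(A-1)) := by ring
    nlinarith [mul_nonneg hd (by linarith : (0:ℝ) ≤ B-(A-1)), e]
  · rw [hQx, hRy, div_le_div_iff₀ hB0 hAp]
    have e : ((p₁-p₂)*A + (p₀-p₂))*B - ((p₁-p₂)*B - (p₀-p₁))*(A+1)
        = (p₀-p₁)*(A+B+1) := by ring
    nlinarith [mul_nonneg hd (by linarith : (0:ℝ) ≤ A+B+1), e]
  · rw [hRy, hQy, div_le_div_iff₀ hAp hB0]
    have e : ((p₁-p₂)*B + (p₀-p₁))*(A+1) - ((p₁-p₂)*A + (p₀-p₂))*B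
        = (p₀-p₁)*(A+1-B) := by ring
    nlinarith [mul_nonneg hd (by linarith : (0:ℝ) ≤ A+1-B), e]
end
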